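/- arXiv:2210.13262 — 3 statements merged into one kernel-verified Lean document; each statement's English description precedes it below -/
import Mathlib

section
/- Let R be a commutative ℚ-algebra, n a finite type, and M an n×n matrix over R. Then in R[[t]] one has exp(Σ_{m≥1} (trace(M^m)/m)·t^m) · det(1 − t·M) = 1, where M is regarded as a matrix over R[[t]] via the constant-coefficient embedding; that is, the exponential expression of the zeta function coincides with the Hashimoto expression 1/det(1 − t·M). -/
/-! Both factors have constant term `1`. Over a `ℚ`-algebra, the logarithmic derivative of the
exponential is `∑ₘ tr(M^{m+1}) tᵐ = tr (M (1 - tM)⁻¹)`, while by Jacobi's formula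
`D (det A) = tr (adj A · D A)` the logarithmic derivative of `det (1 - tM)` is `-tr (M (1 - tM)⁻¹)`.
So the product has derivative `0` and constant term `1`, hence equals `1`. -/

open PowerSeries Matrix Finset

noncomputable section

variable {V A R : Type*}

/-- Exponential of a formal power series over a ℚ-algebra (intended for series with zero
constant term): `exp f = ∑ₖ f^k / k!`; the coefficient of degree `n` only receives
contributions from `k ≤ n` when the constant term of `f` vanishes. -/
def pexp [CommRing R] [Algebra ℚ R] (f : PowerSeries R) : PowerSeries R :=
  PowerSeries.mk fun n => ∑ k ∈ Finset.range (n + 1),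
    ((Nat.factorial k : ℚ))⁻¹ • (PowerSeries.coeff (R := R) n (f ^ k))

/-- The generalized weight matrix `M(a,a') = τ(a')·δ_{𝔥a,𝔱a'} − υ(a')·δ_{a⁻¹,a'}`. -/
def genWeight [CommRing R] [DecidableEq V] [DecidableEq A]
    (tl hd : A → V) (inv : A → Option A) (τ υ : A → R) : Matrix A A R :=
  fun a a' => τ a' * (if hd a = tl a' then 1 else 0) -
    (if inv a = some a' then υ a' else 0)

/-- The matrix `J(a,a') = υ(a')·δ_{a⁻¹,a'}`. -/
def invJ [CommRing R] [DecidableEq A] (inv : A → Option A) (υ : A → R) :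
    Matrix A A R :=
  fun a a' => if inv a = some a' then υ a' else 0

/-- `c_a(t)`: `1 + υ(a)t` for loops, `1 − υ(a)υ(a⁻¹)t²` for non-loop arcs with inverse,
`1` for arcs with no inverse. -/
def cFac [CommRing R] [DecidableEq V] (tl hd : A → V) (inv : A → Option A)
    (υ : A → R) (a : A) : PowerSeries R :=
  if tl a = hd a then 1 + PowerSeries.C (R := R) (υ a) * X
  else
    match inv a with
    | some b => 1 - PowerSeries.C (R := R) (υ a * υ b) * X ^ 2
    | none => 1

/-- The weighted adjacency matrix `A_Δ`. -/
def adjMat [CommRing R] [Fintype A] [DecidableEq V] (tl hd : A → V)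
    (inv : A → Option A) (τ υ : A → R) : Matrix V V (PowerSeries R) :=
  fun u v => ∑ a : A, if tl a = u ∧ hd a = v then
    PowerSeries.C (R := R) (τ a) * Ring.inverse (cFac tl hd inv υ a) else 0

/-- The weighted backtrack matrix `B_Δ`. -/
def backMat [CommRing R] [Fintype A] [DecidableEq V] (tl hd : A → V)
    (inv : A → Option A) (τ υ : A → R) : Matrix V V (PowerSeries R) :=
  fun u v => if u = v then
    ∑ a : A, (if tl a = u ∧ tl a ≠ hd a then
      (match inv a with
       | some b => PowerSeries.C (R := R) (τ a * υ b) * Ring.inverse (cFac tl hd inv υ a)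
       | none => 0)
      else 0)
  else 0

/-- The sum `N_m` of the circular products over all closed paths of length `m`. -/
def circSum [CommRing R] [Fintype A] [DecidableEq A] [DecidableEq V]
    (tl hd : A → V) (M : Matrix A A R) (m : ℕ) [NeZero m] : R :=
  ∑ f ∈ Finset.univ.filter (fun f : ZMod m → A => ∀ i, hd (f i) = tl (f (i + 1))),
    ∏ i, M (f i) (f (i + 1))

/-- `N_m` as a function of `m : ℕ` (junk value `0` at `m = 0`). -/
def Nfun [CommRing R] [Fintype A] [DecidableEq A] [DecidableEq V]
    (tl hd : A → V) (M : Matrix A A R) (m : ℕ) : R :=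
  if h : m = 0 then 0 else
    haveI : NeZero m := ⟨h⟩
    circSum tl hd M m

/-- The generalized weighted zeta function `exp (∑_{m ≥ 1} (N_m / m) t^m)`. -/
def zetaFun [CommRing R] [Algebra ℚ R] (N : ℕ → R) : PowerSeries R :=
  pexp (PowerSeries.mk fun m => if m = 0 then 0 else ((m : ℚ)⁻¹) • N m)


namespace Derivation

section Prod
variable {S T M : Type*} [CommSemiring S] [CommSemiring T] [AddCommMonoid M] [Algebra S T]
  [Module T M] [Module S M]

theorem map_finset_prod {ι : Type*} [DecidableEq ι] (D : Derivation S T M) (s : Finset ι)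
    (f : ι → T) : D (∏ i ∈ s, f i) = ∑ i ∈ s, (∏ j ∈ s.erase i, f j) • D (f i) := by
  induction s using Finset.induction with
  | empty => simp
  | @insert a s ha ih =>
    rw [prod_insert ha, leibniz, ih, sum_insert ha, erase_insert ha, smul_sum, add_comm]
    congr 1
    refine sum_congr rfl fun i hi => ?_
    rw [erase_insert_of_ne (ne_of_mem_of_not_mem hi ha).symm,
      prod_insert fun h => ha (mem_of_mem_erase h), smul_smul]

end Prod

variable {S T : Type*} [CommSemiring S] [CommRing T] [Algebra S T]
  {n : Type*} [Fintype n] [DecidableEq n]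

theorem map_det (D : Derivation S T T) (A : Matrix n n T) :
    D A.det = ∑ j, (A.updateCol j fun i => D (A i j)).det := by
  simp_rw [det_apply, map_sum, Finset.sum_comm (γ := n)]
  refine sum_congr rfl fun σ _ => ?_
  rw [Units.smul_def, map_zsmul, map_finset_prod, smul_sum]
  refine sum_congr rfl fun j _ => ?_
  rw [← mul_prod_erase univ _ (mem_univ j), updateCol_self, smul_eq_mul, mul_comm]
  congr 2
  exact prod_congr rfl fun i hi => by rw [updateCol_ne (ne_of_mem_erase hi)]

theorem map_det_eq_trace_adjugate_mul (D : Derivation S T T) (A : Matrix n n T) :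
    D A.det = trace (A.adjugate * A.map D) := by
  rw [map_det]
  refine sum_congr rfl fun j _ => ?_
  rw [← cramer_apply, cramer_eq_adjugate_mulVec]
  rfl

end Derivation

namespace PowerSeries

variable [CommRing R] [Algebra ℚ R]

def expTrunc (N : ℕ) (f : R⟦X⟧) : R⟦X⟧ := ∑ k ∈ range (N + 1), (k.factorial : ℚ)⁻¹ • f ^ k

theorem coeff_pexp (f : R⟦X⟧) (n : ℕ) : coeff n (pexp f) = coeff n (expTrunc n f) := by
  simp only [pexp, expTrunc, coeff_mk, map_sum, coeff_smul]

theorem coeff_expTrunc_of_le {f : R⟦X⟧} (hf : constantCoeff f = 0) {m N : ℕ} (h : m ≤ N) :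
    coeff m (expTrunc N f) = coeff m (pexp f) := by
  rw [coeff_pexp]
  simp only [expTrunc, map_sum, coeff_smul]
  refine (sum_subset (range_subset_range.2 (by omega)) fun k _ hk => ?_).symm
  have hXk : X ^ k ∣ f ^ k := pow_dvd_pow_of_dvd (X_dvd_iff.2 hf) k
  rw [X_pow_dvd_iff.1 hXk m (by simpa using hk), smul_zero]

theorem derivative_expTrunc_succ (f : R⟦X⟧) (N : ℕ) :
    d⁄dX R (expTrunc (N + 1) f) = d⁄dX R f * expTrunc N f := by
  rw [expTrunc, sum_range_succ', expTrunc, mul_sum]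
  simp only [map_add, map_sum, map_rat_smul, derivative_pow, pow_zero, Derivation.map_one_eq_zero,
    smul_zero, add_zero, add_tsub_cancel_right]
  refine sum_congr rfl fun k _ => ?_
  rw [mul_assoc, ← nsmul_eq_mul, ← Nat.cast_smul_eq_nsmul ℚ, smul_smul, Nat.factorial_succ,
    Nat.cast_mul, _root_.mul_inv_rev, mul_assoc, inv_mul_cancel₀ (by positivity), mul_one,
    mul_smul_comm, mul_comm (d⁄dX R f)]

theorem derivative_pexp {f : R⟦X⟧} (hf : constantCoeff f = 0) :
    d⁄dX R (pexp f) = d⁄dX R f * pexp f := by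
  ext n
  calc coeff n (d⁄dX R (pexp f))
      = coeff (n + 1) (expTrunc (n + 1) f) * (n + 1) := by rw [coeff_derivative, coeff_pexp]
    _ = coeff n (d⁄dX R f * expTrunc n f) := by
      rw [← coeff_derivative, derivative_expTrunc_succ]
    _ = coeff n (d⁄dX R f * pexp f) := by
      simp only [coeff_mul]
      exact sum_congr rfl fun p hp => by
        rw [coeff_expTrunc_of_le hf (Finset.HasAntidiagonal.antidiagonal.snd_le hp)]

theorem constantCoeff_pexp (f : R⟦X⟧) : constantCoeff (pexp f) = 1 := by
  simp [← coeff_zero_eq_constantCoeff, coeff_pexp, expTrunc]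

theorem derivative_mk_inv_natCast_smul (a : ℕ → R) :
    d⁄dX R (mk fun m => if m = 0 then 0 else (m : ℚ)⁻¹ • a m) = mk fun m => a (m + 1) := by
  ext m
  rw [coeff_derivative, coeff_mk, coeff_mk, if_neg m.succ_ne_zero, ← Nat.cast_succ, mul_comm,
    ← nsmul_eq_mul, ← Nat.cast_smul_eq_nsmul ℚ, smul_smul, mul_inv_cancel₀ (by positivity),
    one_smul]

end PowerSeries

namespace Matrix

theorem adjugate_eq_det_smul_of_mul_eq_one {α n : Type*} [CommRing α] [Fintype n] [DecidableEq n]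
    {A B : Matrix n n α} (h : A * B = 1) : A.adjugate = A.det • B := by
  rw [← Matrix.mul_one A.adjugate, ← h, ← Matrix.mul_assoc, adjugate_mul, smul_mul,
    Matrix.one_mul]

variable [CommRing R] {n : Type*} [Fintype n] [DecidableEq n] (M : Matrix n n R)

def geomSeries : Matrix n n R⟦X⟧ := of fun i j => PowerSeries.mk fun m => (M ^ m) i j

theorem map_C_mul_geomSeries :
    M.map (C (R := R)) * geomSeries M =
      of fun i j => PowerSeries.mk fun m => (M ^ (m + 1)) i j := by
  ext i j m
  simp only [mul_apply, geomSeries, of_apply, map_apply, map_sum, coeff_C_mul, coeff_mk, pow_succ']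

theorem one_sub_X_smul_mul_geomSeries : (1 - (X : R⟦X⟧) • M.map C) * geomSeries M = 1 := by
  rw [sub_mul, one_mul, smul_mul, map_C_mul_geomSeries]
  ext i j m
  cases m with
  | zero => simp [geomSeries, one_apply]
  | succ m => simp [geomSeries, one_apply, coeff_succ_X_mul, apply_ite, coeff_one]


theorem derivative_det_one_sub_X_smul :
    d⁄dX R (1 - (X : R⟦X⟧) • M.map C).det =
      -((PowerSeries.mk fun m => trace (M ^ (m + 1))) * (1 - (X : R⟦X⟧) • M.map C).det) := by
  have hD : (1 - (X : R⟦X⟧) • M.map C).map (d⁄dX R) = -M.map C := by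
    ext i j : 1
    simp [one_apply, apply_ite]
  rw [Derivation.map_det_eq_trace_adjugate_mul,
    adjugate_eq_det_smul_of_mul_eq_one (one_sub_X_smul_mul_geomSeries M), smul_mul, trace_smul, hD,
    Matrix.mul_neg, trace_neg, trace_mul_comm, map_C_mul_geomSeries, smul_eq_mul, mul_neg, mul_comm]
  congr 2
  ext m
  simp [trace]

theorem constantCoeff_det_one_sub_X_smul : constantCoeff (1 - (X : R⟦X⟧) • M.map C).det = 1 := by
  have h0 : (1 - (X : R⟦X⟧) • M.map C).map constantCoeff = 1 := by
    ext i j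
    by_cases h : i = j <;> simp [h, one_apply]
  rw [RingHom.map_det, RingHom.mapMatrix_apply, h0, det_one]

end Matrix

/-- for any square matrix `M` over a commutative `ℚ`-algebra `R`,
`exp(∑_{m≥1} (trace(M^m)/m)·t^m) · det(1 − t·M) = 1` in `R[[t]]`. -/
theorem exp_trace_mul_det_eq_one
    {n : Type*} [Fintype n] [DecidableEq n]
    [CommRing R] [Algebra ℚ R] (M : Matrix n n R) :
    pexp (PowerSeries.mk fun m =>
        if m = 0 then 0 else ((m : ℚ)⁻¹) • Matrix.trace (M ^ m)) *
      Matrix.det (1 - (PowerSeries.X : PowerSeries R) • M.map (PowerSeries.C (R := R))) = 1 := by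
  set L : R⟦X⟧ := mk fun m => if m = 0 then 0 else ((m : ℚ)⁻¹) • trace (M ^ m)
  have hL0 : constantCoeff L = 0 := by simp [L]
  have := IsAddTorsionFree.of_module_rat R
  refine derivative.ext ?_ ?_
  · rw [Derivation.leibniz, derivative_pexp hL0, derivative_mk_inv_natCast_smul,
      derivative_det_one_sub_X_smul, Derivation.map_one_eq_zero, smul_eq_mul, smul_eq_mul]
    ring
  · rw [map_mul, constantCoeff_pexp, constantCoeff_det_one_sub_X_smul, map_one, one_mul]
end
end

section
/- Let V, A, 𝔱, 𝔥, inv, R, τ, υ, J, A_Δ, B_Δ be as described. Let K be the A×V matrix over R with K(a,v) = δ_{𝔥a,v} and let L be the V×A matrix over R with L(u,a') = τ(a')·δ_{u,𝔱a'}. Then, regarding K, L, J as matrices over R[[t]], one has L · (1 + t·J)⁻¹ · K = A_Δ − t·B_Δ as V×V matrices over R[[t]]. -/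
open PowerSeries Matrix Finset

noncomputable section

variable {V A R : Type*}

/-! Split `J = Λ + J°`, where `Λ` is the diagonal of loop weights and `J°` keeps the rows of
the non-loop arcs. As `(a⁻¹)⁻¹ = a`, the product `J° J` is diagonal with entries `υ(a) υ(a⁻¹)`
on non-loop arcs, so `(1 - tJ°)(1 + tJ) = 1 + tΛ - t² J° J` is the diagonal matrix of the
`c_a(t)`, and `(1 + tJ)⁻¹ = diag(c_a(t)⁻¹) (1 - tJ°)`. Sandwiched between `L` and `K`, the first
term gives `A_Δ`; the second gives `t B_Δ` because the head of `a⁻¹` is the tail of `a`. -/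

section

variable [CommRing R] [DecidableEq V] (tl hd : A → V) (inv : A → Option A) (υ : A → R)

theorem isUnit_cFac (a : A) : IsUnit (cFac tl hd inv υ a) := by
  rw [isUnit_iff_constantCoeff]
  unfold cFac
  split_ifs
  · simp
  · cases inv a <;> simp

def loopWeight (a : A) : R := if tl a = hd a then υ a else 0

def backtrackWeight (a : A) : R :=
  if tl a = hd a then 0 else
    match inv a with
    | some b => υ a * υ b
    | none => 0

theorem cFac_eq_loopWeight_backtrackWeight (a : A) :
    cFac tl hd inv υ a =
      1 + X * C (loopWeight tl hd υ a) - X ^ 2 * C (backtrackWeight tl hd inv υ a) := by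
  unfold cFac loopWeight backtrackWeight
  split_ifs
  · simp [mul_comm]
  · cases inv a <;> simp [mul_comm]

variable [DecidableEq A]

def nonloopInvJ : Matrix A A R := fun a a' => if tl a = hd a then 0 else invJ inv υ a a'

theorem invJ_eq_diagonal_add_nonloopInvJ (hloop : ∀ a, tl a = hd a → inv a = some a) :
    invJ inv υ = diagonal (loopWeight tl hd υ) + nonloopInvJ tl hd inv υ := by
  ext a a'
  by_cases hl : tl a = hd a
  · obtain rfl | hne := eq_or_ne a a'
    · simp [invJ, nonloopInvJ, loopWeight, hl, hloop a hl]
    · simp [invJ, nonloopInvJ, hl, hloop a hl, hne]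
  · simp [nonloopInvJ, loopWeight, diagonal_apply, hl]

variable [Fintype A]

theorem nonloopInvJ_mul_invJ (hinvol : ∀ a b, inv a = some b → inv b = some a) :
    nonloopInvJ tl hd inv υ * invJ inv υ = diagonal (backtrackWeight tl hd inv υ) := by
  ext a a''
  rw [mul_apply]
  by_cases hl : tl a = hd a
  · simp [nonloopInvJ, backtrackWeight, diagonal_apply, hl]
  cases hinv : inv a with
  | none => simp [nonloopInvJ, invJ, backtrackWeight, diagonal_apply, hl, hinv]
  | some b =>
    rw [Finset.sum_eq_single b
      (fun a' _ hne => by simp [nonloopInvJ, invJ, hl, hinv, Ne.symm hne]) (by simp)]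
    simp only [nonloopInvJ, invJ, backtrackWeight, diagonal_apply, hl, hinv, hinvol a b hinv,
      if_false, if_true, Option.some.injEq]
    split_ifs with h <;> simp [h, mul_comm]

theorem one_sub_smul_nonloopInvJ_mul_one_add_smul_invJ
    (hinvol : ∀ a b, inv a = some b → inv b = some a)
    (hloop : ∀ a, tl a = hd a → inv a = some a) :
    (1 - (X : R⟦X⟧) • (nonloopInvJ tl hd inv υ).map C) *
        (1 + (X : R⟦X⟧) • (invJ inv υ).map C) = diagonal (cFac tl hd inv υ) := by
  have hdiff : (invJ inv υ).map C - (nonloopInvJ tl hd inv υ).map C =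
      diagonal fun a => C (loopWeight tl hd υ a) := by
    rw [← Matrix.map_sub _ (map_sub C), invJ_eq_diagonal_add_nonloopInvJ tl hd inv υ hloop,
      add_sub_cancel_right, diagonal_map (map_zero _)]
  have hprod : (nonloopInvJ tl hd inv υ).map C * (invJ inv υ).map C =
      diagonal fun a => C (backtrackWeight tl hd inv υ a) := by
    rw [← Matrix.map_mul, nonloopInvJ_mul_invJ tl hd inv υ hinvol, diagonal_map (map_zero _)]
  calc _ = 1 + (X : R⟦X⟧) • ((invJ inv υ).map C - (nonloopInvJ tl hd inv υ).map C) -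
        (X : R⟦X⟧) ^ 2 • ((nonloopInvJ tl hd inv υ).map C * (invJ inv υ).map C) := by
        simp only [sub_mul, mul_add, one_mul, mul_one, smul_mul_smul_comm, smul_sub, pow_two]
        abel
    _ = diagonal (cFac tl hd inv υ) := by
      rw [hdiff, hprod, ← diagonal_one, ← diagonal_smul, ← diagonal_smul, diagonal_add,
        diagonal_sub]
      congr
      funext a
      simp [cFac_eq_loopWeight_backtrackWeight]

theorem inv_one_add_smul_invJ
    (hinvol : ∀ a b, inv a = some b → inv b = some a)
    (hloop : ∀ a, tl a = hd a → inv a = some a) :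
    (1 + (X : R⟦X⟧) • (invJ inv υ).map C)⁻¹ =
      diagonal (fun a => Ring.inverse (cFac tl hd inv υ a)) *
        (1 - (X : R⟦X⟧) • (nonloopInvJ tl hd inv υ).map C) := by
  refine inv_eq_left_inv ?_
  rw [Matrix.mul_assoc, one_sub_smul_nonloopInvJ_mul_one_add_smul_invJ tl hd inv υ hinvol hloop,
    diagonal_mul_diagonal, ← diagonal_one]
  congr
  funext a
  exact Ring.inverse_mul_cancel _ (isUnit_cFac tl hd inv υ a)

theorem map_mul_diagonal_inv_cFac_mul_map_eq_adjMat (τ : A → R)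
    (K : Matrix A V R) (hK : ∀ a v, K a v = if hd a = v then 1 else 0)
    (L : Matrix V A R) (hL : ∀ u a', L u a' = τ a' * (if u = tl a' then 1 else 0)) :
    L.map C * diagonal (fun a => Ring.inverse (cFac tl hd inv υ a)) * K.map C =
      adjMat tl hd inv τ υ := by
  refine Matrix.ext fun u v => ?_
  rw [mul_apply, adjMat]
  refine sum_congr rfl fun a _ => ?_
  by_cases hu : u = tl a <;> by_cases hv : hd a = v <;> simp [hu, hv, hK, hL, eq_comm]

theorem nonloopInvJ_mul_apply (hhd : ∀ a b, inv a = some b → hd b = tl a)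
    (K : Matrix A V R) (hK : ∀ a v, K a v = if hd a = v then 1 else 0) (a : A) (v : V) :
    (nonloopInvJ tl hd inv υ * K) a v =
      if tl a = v ∧ tl a ≠ hd a then (match inv a with | some b => υ b | none => 0) else 0 := by
  rw [mul_apply]
  by_cases hl : tl a = hd a
  · simp [nonloopInvJ, hl]
  cases hinv : inv a with
  | none => simp [nonloopInvJ, invJ, hl, hinv]
  | some b =>
    rw [Finset.sum_eq_single b
      (fun a' _ hne => by simp [nonloopInvJ, invJ, hl, hinv, Ne.symm hne]) (by simp)]
    simp [nonloopInvJ, invJ, hl, hinv, hK, hhd a b hinv]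

theorem map_mul_diagonal_inv_cFac_mul_map_eq_backMat (τ : A → R)
    (hhd : ∀ a b, inv a = some b → hd b = tl a)
    (K : Matrix A V R) (hK : ∀ a v, K a v = if hd a = v then 1 else 0)
    (L : Matrix V A R) (hL : ∀ u a', L u a' = τ a' * (if u = tl a' then 1 else 0)) :
    L.map C * diagonal (fun a => Ring.inverse (cFac tl hd inv υ a)) *
        (nonloopInvJ tl hd inv υ * K).map C = backMat tl hd inv τ υ := by
  refine Matrix.ext fun u v => ?_
  rw [mul_apply, backMat]
  simp only [mul_diagonal, map_apply, hL, nonloopInvJ_mul_apply tl hd inv υ hhd K hK]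
  split_ifs with huv
  · subst huv
    refine sum_congr rfl fun a _ => ?_
    by_cases hu : u = tl a
    · by_cases hl : tl a = hd a <;> cases inv a <;> simp [hu, hl, mul_comm, mul_left_comm]
    · simp [hu, Ne.symm hu]
  · refine sum_eq_zero fun a _ => ?_
    by_cases hu : u = tl a
    · subst hu
      simp [huv]
    · simp [hu]

end

theorem L_inv_K_eq_adj_sub_back_general
    [Fintype A] [DecidableEq V] [DecidableEq A]
    [CommRing R]
    (tl hd : A → V) (inv : A → Option A)
    (hsym : ∀ a b, inv a = some b → inv b = some a ∧ tl b = hd a ∧ hd b = tl a)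
    (hloop : ∀ a, tl a = hd a → inv a = some a)
    (τ υ : A → R)
    (K : Matrix A V R) (hK : ∀ a v, K a v = if hd a = v then 1 else 0)
    (L : Matrix V A R) (hL : ∀ u a', L u a' = τ a' * (if u = tl a' then 1 else 0)) :
    L.map (PowerSeries.C (R := R)) *
        (1 + (PowerSeries.X : PowerSeries R) • (invJ inv υ).map (PowerSeries.C (R := R)))⁻¹ *
        K.map (PowerSeries.C (R := R)) =
      adjMat tl hd inv τ υ - (PowerSeries.X : PowerSeries R) • backMat tl hd inv τ υ := by
  rw [inv_one_add_smul_invJ tl hd inv υ (fun a b h => (hsym a b h).1) hloop,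
    ← map_mul_diagonal_inv_cFac_mul_map_eq_adjMat tl hd inv υ τ K hK L hL,
    ← map_mul_diagonal_inv_cFac_mul_map_eq_backMat tl hd inv υ τ (fun a b h => (hsym a b h).2.2)
      K hK L hL, Matrix.map_mul]
  simp only [Matrix.mul_sub, Matrix.sub_mul, Matrix.mul_one, Matrix.mul_smul, Matrix.smul_mul,
    Matrix.mul_assoc]

/-- `L · (1 + t·J)⁻¹ · K = A_Δ − t·B_Δ` as `V × V` matrices over `R[[t]]`,
where `K(a,v) = δ_{𝔥a,v}` and `L(u,a') = τ(a')·δ_{u,𝔱a'}`. -/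
theorem L_inv_K_eq_adj_sub_back
    [Fintype V] [Fintype A] [DecidableEq V] [DecidableEq A]
    [CommRing R] [Algebra ℚ R]
    (tl hd : A → V) (inv : A → Option A)
    (hsym : ∀ a b, inv a = some b → inv b = some a ∧ tl b = hd a ∧ hd b = tl a)
    (hloop : ∀ a, tl a = hd a → inv a = some a)
    (hnonloop : ∀ a b, tl a ≠ hd a → inv a = some b → b ≠ a)
    (τ υ : A → R)
    (K : Matrix A V R) (hK : ∀ a v, K a v = if hd a = v then 1 else 0)
    (L : Matrix V A R) (hL : ∀ u a', L u a' = τ a' * (if u = tl a' then 1 else 0)) :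
    L.map (PowerSeries.C (R := R)) *
        (1 + (PowerSeries.X : PowerSeries R) • (invJ inv υ).map (PowerSeries.C (R := R)))⁻¹ *
        K.map (PowerSeries.C (R := R)) =
      adjMat tl hd inv τ υ - (PowerSeries.X : PowerSeries R) • backMat tl hd inv τ υ :=
  L_inv_K_eq_adj_sub_back_general tl hd inv hsym hloop τ υ K hK L hL
end
end

section
/- Let V, A, 𝔱, 𝔥, inv, R, τ, υ, M, J be as described, and let K be the A×V matrix over R with K(a,v) = δ_{𝔥a,v} and L the V×A matrix over R with L(u,a') = τ(a')·δ_{u,𝔱a'}. Then M = K·L − J, and in R[[t]] one has det(1 − t·M) = det(1 + t·J) · det(1_V − t·L·(1 + t·J)⁻¹·K), where all matrices are regarded over R[[t]] via the constant-coefficient embedding. -/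
open PowerSeries Matrix Finset

noncomputable section

variable {V A R : Type*}

theorem genWeight_eq_mul_sub_invJ [Fintype V] [DecidableEq V] [DecidableEq A] [CommRing R]
    (tl hd : A → V) (inv : A → Option A) (τ υ : A → R)
    (K : Matrix A V R) (hK : ∀ a v, K a v = if hd a = v then 1 else 0)
    (L : Matrix V A R) (hL : ∀ u a', L u a' = τ a' * (if u = tl a' then 1 else 0)) :
    genWeight tl hd inv τ υ = K * L - invJ inv υ := by
  ext a a'
  simp only [genWeight, invJ, Matrix.sub_apply, mul_apply, hK, hL]
  rw [Finset.sum_eq_single (hd a)]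
  · simp [eq_comm]
  · intro v _ hv
    rw [if_neg (Ne.symm hv), zero_mul]
  · simp

theorem isUnit_det_one_add_X_smul_map_C [Fintype A] [DecidableEq A] [CommRing R]
    (N : Matrix A A R) : IsUnit (1 + (X : PowerSeries R) • N.map C).det := by
  have hconst : (1 + (X : PowerSeries R) • N.map C).map constantCoeff = 1 := by
    ext a b
    simp [one_apply]
  rw [PowerSeries.isUnit_iff_constantCoeff, RingHom.map_det, RingHom.mapMatrix_apply, hconst,
    det_one]
  exact isUnit_one

/-- Factor out `P = 1 + x • J`, then apply Weinstein–Aronszajn (`det_one_sub_mul_comm`)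
to `1 - (P⁻¹ * K) * (x • L)`. -/
theorem det_one_sub_smul_mul_sub [Fintype A] [DecidableEq A] [Fintype V] [DecidableEq V]
    {S : Type*} [CommRing S] (x : S) (K : Matrix A V S) (L : Matrix V A S) (J : Matrix A A S)
    (hP : IsUnit (1 + x • J).det) :
    (1 - x • (K * L - J)).det =
      (1 + x • J).det * (1 - x • (L * (1 + x • J)⁻¹ * K)).det := by
  set P := 1 + x • J
  have hfac : 1 - x • (K * L - J) = P * (1 - (P⁻¹ * K) * (x • L)) := by
    rw [Matrix.mul_sub, Matrix.mul_one, ← Matrix.mul_assoc, ← Matrix.mul_assoc,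
      mul_nonsing_inv P hP, Matrix.one_mul, Matrix.mul_smul, smul_sub]
    simp only [P]
    abel
  rw [hfac, det_mul, det_one_sub_mul_comm, Matrix.smul_mul, Matrix.mul_assoc]

theorem det_factorization_general
    [Fintype V] [Fintype A] [DecidableEq V] [DecidableEq A]
    [CommRing R]
    (tl hd : A → V) (inv : A → Option A)
    (τ υ : A → R)
    (K : Matrix A V R) (hK : ∀ a v, K a v = if hd a = v then 1 else 0)
    (L : Matrix V A R) (hL : ∀ u a', L u a' = τ a' * (if u = tl a' then 1 else 0)) :
    genWeight tl hd inv τ υ = K * L - invJ inv υ ∧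
    Matrix.det (1 - (PowerSeries.X : PowerSeries R) •
        (genWeight tl hd inv τ υ).map (PowerSeries.C (R := R))) =
      Matrix.det (1 + (PowerSeries.X : PowerSeries R) •
        (invJ inv υ).map (PowerSeries.C (R := R))) *
      Matrix.det ((1 : Matrix V V (PowerSeries R)) -
        (PowerSeries.X : PowerSeries R) • (L.map (PowerSeries.C (R := R)) *
          (1 + (PowerSeries.X : PowerSeries R) • (invJ inv υ).map (PowerSeries.C (R := R)))⁻¹ *
          K.map (PowerSeries.C (R := R)))) := by
  have hM := genWeight_eq_mul_sub_invJ tl hd inv τ υ K hK L hL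
  refine ⟨hM, ?_⟩
  rw [hM, Matrix.map_sub _ (map_sub C), Matrix.map_mul]
  exact det_one_sub_smul_mul_sub _ _ _ _ (isUnit_det_one_add_X_smul_map_C _)

/-- `M = K·L − J`, and
`det(1 − t·M) = det(1 + t·J) · det(1_V − t·L·(1 + t·J)⁻¹·K)` in `R[[t]]`. -/
theorem det_factorization
    [Fintype V] [Fintype A] [DecidableEq V] [DecidableEq A]
    [CommRing R] [Algebra ℚ R]
    (tl hd : A → V) (inv : A → Option A)
    (hsym : ∀ a b, inv a = some b → inv b = some a ∧ tl b = hd a ∧ hd b = tl a)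
    (hloop : ∀ a, tl a = hd a → inv a = some a)
    (hnonloop : ∀ a b, tl a ≠ hd a → inv a = some b → b ≠ a)
    (τ υ : A → R)
    (K : Matrix A V R) (hK : ∀ a v, K a v = if hd a = v then 1 else 0)
    (L : Matrix V A R) (hL : ∀ u a', L u a' = τ a' * (if u = tl a' then 1 else 0)) :
    genWeight tl hd inv τ υ = K * L - invJ inv υ ∧
    Matrix.det (1 - (PowerSeries.X : PowerSeries R) •
        (genWeight tl hd inv τ υ).map (PowerSeries.C (R := R))) =
      Matrix.det (1 + (PowerSeries.X : PowerSeries R) •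
        (invJ inv υ).map (PowerSeries.C (R := R))) *
      Matrix.det ((1 : Matrix V V (PowerSeries R)) -
        (PowerSeries.X : PowerSeries R) • (L.map (PowerSeries.C (R := R)) *
          (1 + (PowerSeries.X : PowerSeries R) • (invJ inv υ).map (PowerSeries.C (R := R)))⁻¹ *
          K.map (PowerSeries.C (R := R)))) :=
  det_factorization_general tl hd inv τ υ K hK L hL
end
end
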